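/- Let 0 ≤ γ < α < n and κ ∈ (0,1). Then for all locally integrable f and all x ≠ 0, the local fractional maximal function satisfies M_{κ,α,loc} f(x) ≲ |x|^{α−γ} M_{κ,γ,loc} f(x), and the local fractional integral satisfies I_{κ,α,loc}(|f|)(x) ≲ |x|^{α−γ} M_{κ,γ,loc} f(x), with constants depending only on n, α, γ, κ. -/

import Mathlib

open MeasureTheory Metric Set ENNReal

noncomputable section

abbrev Euc (n : ℕ) := EuclideanSpace ℝ (Fin n)

/-- Extended-real weighted local Morrey norm (sup over balls centered at the origin). -/
def lmNormE (n : ℕ) (p : ℝ) (φ : ℝ → ℝ≥0∞) (w : Euc n → ℝ≥0∞) (g : Euc n → ℝ≥0∞) : ℝ≥0∞ :=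
  ⨆ (R : ℝ) (_ : 0 < R),
    ((φ R)⁻¹ * ∫⁻ x in ball (0 : Euc n) R, g x ^ p * w x) ^ (1 / p)

def lmNorm (n : ℕ) (p : ℝ) (φ : ℝ → ℝ≥0∞) (w : Euc n → ℝ≥0∞) (f : Euc n → ℝ) : ℝ≥0∞ :=
  lmNormE n p φ w (fun x => ENNReal.ofReal |f x|)

/-- Weak weighted local Morrey norm (for nonnegative extended-real valued functions). -/
def wlmNormE (n : ℕ) (q : ℝ) (ψ : ℝ → ℝ≥0∞) (v : Euc n → ℝ≥0∞) (g : Euc n → ℝ≥0∞) : ℝ≥0∞ :=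
  ⨆ (R : ℝ) (_ : 0 < R) (t : ℝ≥0∞) (_ : 0 < t),
    t * ((ψ R)⁻¹ * ∫⁻ x in {x : Euc n | x ∈ ball (0 : Euc n) R ∧ t < g x}, v x) ^ (1 / q)

def Doubling (φ : ℝ → ℝ≥0∞) : Prop := ∃ C : ℝ≥0∞, C < ⊤ ∧ ∀ R > (0 : ℝ), φ (2 * R) ≤ C * φ R

def RevDoubling (φ : ℝ → ℝ≥0∞) : Prop :=
  ∃ C : ℝ≥0∞, C < ⊤ ∧ ∀ R > (0 : ℝ), ∀ b ∈ Set.Ioo (0 : ℝ) 1,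
    ∑' j : ℕ, φ (b ^ j * R) ≤ C * φ R

/-- The fractional maximal operator `M_α` (the Hardy–Littlewood maximal
operator when `α = 0`). -/
def fracMax (n : ℕ) (α : ℝ) (g : Euc n → ℝ≥0∞) (x : Euc n) : ℝ≥0∞ :=
  ⨆ (c : Euc n) (r : ℝ) (_ : 0 < r ∧ x ∈ ball c r),
    (volume (ball c r)) ^ (α / (n : ℝ) - 1) * ∫⁻ y in ball c r, g y

/-- The fractional integral (Riesz potential) `I_α`. -/
def fracInt (n : ℕ) (α : ℝ) (g : Euc n → ℝ≥0∞) (x : Euc n) : ℝ≥0∞ :=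
  ∫⁻ y, g y * ENNReal.ofReal (‖x - y‖ ^ (α - (n : ℝ)))

/-- The Köthe dual norm of a weighted local Morrey space, evaluated on a
nonnegative (extended-real valued) function. -/
def kdualLM (n : ℕ) (p : ℝ) (φ : ℝ → ℝ≥0∞) (w : Euc n → ℝ≥0∞) (g : Euc n → ℝ≥0∞) : ℝ≥0∞ :=
  ⨆ (f : Euc n → ℝ) (_ : Measurable f ∧ lmNorm n p φ w f ≤ 1),
    ∫⁻ x, ENNReal.ofReal |f x| * g x

/-- The characteristic function of a ball, as an `ℝ≥0∞` valued function. -/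
def chiE (n : ℕ) (c : Euc n) (r : ℝ) : Euc n → ℝ≥0∞ := (ball c r).indicator fun _ => (1 : ℝ≥0∞)

/-- Samko-type Morrey parameter function `φ_λ(B) = r_B ^ λ`. -/
def phiS (lam : ℝ) : ℝ → ℝ≥0∞ := fun R => ENNReal.ofReal (R ^ lam)

/-- Power weight `w_β(x) = |x| ^ β` (raised to the exponent `s`). -/
def powW (n : ℕ) (β s : ℝ) : Euc n → ℝ≥0∞ := fun x => ENNReal.ofReal (‖x‖ ^ (β * s))

/-- The local fractional maximal operator `M_{κ,α,loc}` (over balls `B ∋ x`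
with `r_B < κ |c_B|`). -/
def locFracMax (n : ℕ) (κ α : ℝ) (g : Euc n → ℝ≥0∞) (x : Euc n) : ℝ≥0∞ :=
  ⨆ (c : Euc n) (r : ℝ) (_ : 0 < r ∧ r < κ * ‖c‖ ∧ x ∈ ball c r),
    (volume (ball c r)) ^ (α / (n : ℝ) - 1) * ∫⁻ y in ball c r, g y

/-- The local fractional integral `I_{κ,α,loc}`. -/
def locFracInt (n : ℕ) (κ α : ℝ) (g : Euc n → ℝ≥0∞) (x : Euc n) : ℝ≥0∞ :=
  ∫⁻ y in ball x (κ * ‖x‖), g y * ENNReal.ofReal (‖x - y‖ ^ (α - (n : ℝ)))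

/-!
An admissible ball `B ∋ x` (one with `r_B < κ |c_B|`) has `|c_B| < |x| + r_B`, hence
`r_B < κ / (1 - κ) |x|`; so `|B| ^ ((α - γ) / n) ≲ |x| ^ (α - γ)`, which turns the `α`-average
over `B` into the `γ`-average.

For the integral, cut `B(x, ρ)` into the dyadic annuli `2⁻ʲ⁻¹ρ ≤ |x - y| < 2⁻ʲρ`. On the `j`-th
one the kernel is at most `(2⁻ʲ⁻¹ρ) ^ (α - n)`, and for `ρ < κ |x|` the ball `B(x, 2⁻ʲρ)` is
admissible, so its integral is `≲ (2⁻ʲρ) ^ (n - γ) M_{κ,γ,loc} f(x)`. The terms form a geometric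
series of ratio `2 ^ (γ - α)`, with sum `≲ ρ ^ (α - γ)`. The ball `B(x, κ |x|)` itself is not
admissible, so the bound is proved for `ρ < κ |x|` and passed to the limit `ρ ↑ κ |x|`.
-/

lemma exists_pow_succ_mul_le_lt_pow_mul {q ρ d : ℝ} (hq0 : 0 < q) (hq1 : q < 1) (hd : 0 < d)
    (hdρ : d < ρ) : ∃ j : ℕ, q ^ (j + 1) * ρ ≤ d ∧ d < q ^ j * ρ := by
  classical
  have hρ : 0 < ρ := hd.trans hdρ
  have hex : ∃ j : ℕ, q ^ (j + 1) * ρ ≤ d := by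
    obtain ⟨j, hj⟩ := exists_pow_lt_of_lt_one (div_pos hd hρ) hq1
    refine ⟨j, le_of_lt ?_⟩
    calc q ^ (j + 1) * ρ ≤ q ^ j * ρ :=
          mul_le_mul_of_nonneg_right (pow_le_pow_of_le_one hq0.le hq1.le j.le_succ) hρ.le
      _ < d := (lt_div_iff₀ hρ).1 hj
  refine ⟨Nat.find hex, Nat.find_spec hex, ?_⟩
  rcases hj : Nat.find hex with _ | m
  · simpa using hdρ
  · exact lt_of_not_ge (Nat.find_min hex (hj ▸ m.lt_succ_self))

section Annuli

variable {E : Type*} [NormedAddCommGroup E]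

lemma ball_subset_insert_iUnion_annuli (x : E) {q ρ : ℝ} (hq0 : 0 < q) (hq1 : q < 1) :
    ball x ρ ⊆ insert x (⋃ j : ℕ, ball x (q ^ j * ρ) \ ball x (q ^ (j + 1) * ρ)) := by
  intro y hy
  rcases eq_or_ne y x with rfl | hyx
  · exact mem_insert _ _
  obtain ⟨j, hj₁, hj₂⟩ :=
    exists_pow_succ_mul_le_lt_pow_mul hq0 hq1 (dist_pos.2 hyx) (mem_ball.1 hy)
  exact mem_insert_of_mem _ (mem_iUnion.2 ⟨j, hj₂, fun h => (mem_ball.1 h).not_ge hj₁⟩)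

variable [MeasurableSpace E] [OpensMeasurableSpace E]

lemma setLIntegral_ball_mul_rpow_norm_sub_le_tsum (μ : Measure E) (g : E → ℝ≥0∞) (x : E)
    {q ρ β : ℝ} (hq0 : 0 < q) (hq1 : q < 1) (hρ : 0 < ρ) (hβ : β < 0) :
    ∫⁻ y in ball x ρ, g y * ENNReal.ofReal (‖x - y‖ ^ β) ∂μ ≤
      ∑' j : ℕ, ENNReal.ofReal ((q ^ (j + 1) * ρ) ^ β) * ∫⁻ y in ball x (q ^ j * ρ), g y ∂μ := by
  set A : ℕ → Set E := fun j => ball x (q ^ j * ρ) \ ball x (q ^ (j + 1) * ρ)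
  have hA : ∀ j, ∫⁻ y in A j, g y * ENNReal.ofReal (‖x - y‖ ^ β) ∂μ ≤
      ENNReal.ofReal ((q ^ (j + 1) * ρ) ^ β) * ∫⁻ y in ball x (q ^ j * ρ), g y ∂μ := by
    intro j
    calc ∫⁻ y in A j, g y * ENNReal.ofReal (‖x - y‖ ^ β) ∂μ
        ≤ ∫⁻ y in A j, ENNReal.ofReal ((q ^ (j + 1) * ρ) ^ β) * g y ∂μ := by
          refine setLIntegral_mono' (measurableSet_ball.diff measurableSet_ball) fun y hy => ?_
          have hdist : q ^ (j + 1) * ρ ≤ ‖x - y‖ := by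
            rw [← dist_eq_norm, dist_comm]
            exact not_lt.1 hy.2
          rw [mul_comm]
          exact mul_le_mul_left
            (ENNReal.ofReal_le_ofReal (Real.rpow_le_rpow_of_nonpos (by positivity) hdist hβ.le)) _
      _ = ENNReal.ofReal ((q ^ (j + 1) * ρ) ^ β) * ∫⁻ y in A j, g y ∂μ :=
          lintegral_const_mul' _ _ ENNReal.ofReal_ne_top
      _ ≤ _ := by gcongr; exact sdiff_subset
  -- The centre does not count: `0 ^ β = 0` for `β ≠ 0` in `Real.rpow`.
  have hcentre : ∫⁻ y in {x}, g y * ENNReal.ofReal (‖x - y‖ ^ β) ∂μ = 0 := by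
    simp [Real.zero_rpow hβ.ne]
  calc ∫⁻ y in ball x ρ, g y * ENNReal.ofReal (‖x - y‖ ^ β) ∂μ
      ≤ ∫⁻ y in {x} ∪ ⋃ j, A j, g y * ENNReal.ofReal (‖x - y‖ ^ β) ∂μ :=
        lintegral_mono_set (ball_subset_insert_iUnion_annuli x hq0 hq1)
    _ ≤ ∫⁻ y in ⋃ j, A j, g y * ENNReal.ofReal (‖x - y‖ ^ β) ∂μ :=
        (lintegral_union_le _ _ _).trans_eq (by rw [hcentre, zero_add])
    _ ≤ ∑' j, ∫⁻ y in A j, g y * ENNReal.ofReal (‖x - y‖ ^ β) ∂μ := lintegral_iUnion_le _ _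
    _ ≤ _ := ENNReal.tsum_le_tsum hA

end Annuli

lemma setLIntegral_ball_le_of_forall_lt {E : Type*} [PseudoMetricSpace E] [MeasurableSpace E]
    (μ : Measure E) (f : E → ℝ≥0∞) (x : E) {R : ℝ} {B : ℝ≥0∞}
    (h : ∀ ρ, 0 < ρ → ρ < R → ∫⁻ y in ball x ρ, f y ∂μ ≤ B) :
    ∫⁻ y in ball x R, f y ∂μ ≤ B := by
  have hunion : ⋃ k : ℕ, ball x (R - 1 / (k + 1)) = ball x R := by
    refine Subset.antisymm (iUnion_subset fun k => ball_subset_ball (sub_le_self _ (by positivity))) ?_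
    intro y hy
    obtain ⟨k, hk⟩ := exists_nat_one_div_lt (sub_pos.2 (mem_ball.1 hy))
    exact mem_iUnion.2 ⟨k, mem_ball.2 (by linarith)⟩
  have hmono : Monotone fun k : ℕ => ball x (R - 1 / (k + 1)) := fun a b hab =>
    ball_subset_ball (sub_le_sub_left (Nat.one_div_le_one_div hab) R)
  rw [← hunion, setLIntegral_iUnion_of_directed _ hmono.directed_le]
  refine iSup_le fun k => ?_
  rcases le_or_gt (R - 1 / (k + 1)) 0 with hρ | hρ
  · rw [ball_eq_empty.2 hρ, Measure.restrict_empty, lintegral_zero_measure]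
    exact zero_le
  · exact h _ hρ (sub_lt_self _ (by positivity))

lemma radius_lt_of_mem_ball {E : Type*} [SeminormedAddCommGroup E] {κ r : ℝ} {c x : E}
    (hκ : κ ∈ Ioo (0 : ℝ) 1) (hrc : r < κ * ‖c‖) (hx : x ∈ ball c r) :
    r < κ / (1 - κ) * ‖x‖ := by
  have hc : ‖c‖ < ‖x‖ + r := by
    have := norm_le_norm_add_norm_sub' c x
    rw [← dist_eq_norm, dist_comm] at this
    linarith [mem_ball.1 hx]
  rw [div_mul_eq_mul_div, lt_div_iff₀ (sub_pos.2 hκ.2)]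
  nlinarith [hκ.1]

lemma pow_succ_mul_rpow_mul_pow_mul_rpow {q ρ : ℝ} (hq : 0 < q) (hρ : 0 < ρ) (a b : ℝ) (j : ℕ) :
    (q ^ (j + 1) * ρ) ^ a * (q ^ j * ρ) ^ b = q ^ a * (q ^ (a + b)) ^ j * ρ ^ (a + b) := by
  rw [Real.mul_rpow (by positivity) hρ.le, Real.mul_rpow (by positivity) hρ.le,
    ← Real.rpow_natCast q (j + 1), ← Real.rpow_natCast q j, ← Real.rpow_natCast (q ^ (a + b)) j,
    ← Real.rpow_mul hq.le, ← Real.rpow_mul hq.le, ← Real.rpow_mul hq.le,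
    mul_mul_mul_comm, ← Real.rpow_add hq, ← Real.rpow_add hρ, ← Real.rpow_add hq]
  congr 2
  push_cast
  ring

section LocalOperators

variable {n : ℕ}

lemma volume_ball_rpow (hn : 0 < n) (c : Euc n) {r : ℝ} (hr : 0 < r) (e : ℝ) :
    volume (ball c r) ^ e =
      ENNReal.ofReal (r ^ ((n : ℝ) * e)) * volume (ball (0 : Euc n) 1) ^ e := by
  have : Nonempty (Fin n) := ⟨⟨0, hn⟩⟩
  rw [Measure.addHaar_ball volume c hr.le, finrank_euclideanSpace_fin, ← Real.rpow_natCast,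
    ENNReal.mul_rpow_of_ne_top ofReal_ne_top measure_ball_lt_top.ne,
    ENNReal.ofReal_rpow_of_pos (by positivity), ← Real.rpow_mul hr.le]

lemma le_locFracMax {κ γ : ℝ} (g : Euc n → ℝ≥0∞) {x c : Euc n} {r : ℝ} (hr : 0 < r)
    (hrc : r < κ * ‖c‖) (hx : x ∈ ball c r) :
    volume (ball c r) ^ (γ / n - 1) * ∫⁻ y in ball c r, g y ≤ locFracMax n κ γ g x :=
  le_iSup₂_of_le c r (le_iSup_of_le ⟨hr, hrc, hx⟩ le_rfl)

lemma setLIntegral_ball_le_locFracMax (hn : 0 < n) {κ γ : ℝ} (g : Euc n → ℝ≥0∞) {x : Euc n}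
    {r : ℝ} (hr : 0 < r) (hrx : r < κ * ‖x‖) :
    ∫⁻ y in ball x r, g y ≤
      ENNReal.ofReal (r ^ ((n : ℝ) - γ)) * volume (ball (0 : Euc n) 1) ^ (1 - γ / n) *
        locFracMax n κ γ g x := by
  have hv0 : volume (ball x r) ≠ 0 := (measure_ball_pos volume x hr).ne'
  have hexp : (n : ℝ) * (1 - γ / n) = n - γ := by field_simp
  calc ∫⁻ y in ball x r, g y
      = volume (ball x r) ^ (1 - γ / n) *
          (volume (ball x r) ^ (γ / n - 1) * ∫⁻ y in ball x r, g y) := by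
        rw [← mul_assoc, ← ENNReal.rpow_add _ _ hv0 measure_ball_lt_top.ne]
        norm_num
    _ ≤ _ := by
        rw [volume_ball_rpow hn x hr, hexp]
        exact mul_le_mul_right (le_locFracMax g hr hrx (mem_ball_self hr)) _

lemma locFracMax_le_mul_locFracMax (hn : 0 < n) {κ α γ : ℝ} (hκ : κ ∈ Ioo (0 : ℝ) 1)
    (hγα : γ ≤ α) (g : Euc n → ℝ≥0∞) (x : Euc n) :
    locFracMax n κ α g x ≤
      ENNReal.ofReal ((κ / (1 - κ)) ^ (α - γ)) * volume (ball (0 : Euc n) 1) ^ ((α - γ) / n) *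
        ENNReal.ofReal (‖x‖ ^ (α - γ)) * locFracMax n κ γ g x := by
  refine iSup₂_le fun c r => iSup_le fun ⟨hr, hrc, hx⟩ => ?_
  have hv0 : volume (ball c r) ≠ 0 := (measure_ball_pos volume c hr).ne'
  have hsplit : volume (ball c r) ^ (α / n - 1) =
      volume (ball c r) ^ ((α - γ) / n) * volume (ball c r) ^ (γ / n - 1) := by
    rw [← ENNReal.rpow_add _ _ hv0 measure_ball_lt_top.ne]
    ring_nf
  have hK : 0 ≤ κ / (1 - κ) := div_nonneg hκ.1.le (sub_pos.2 hκ.2).le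
  have hvol : volume (ball c r) ^ ((α - γ) / n) ≤
      ENNReal.ofReal ((κ / (1 - κ)) ^ (α - γ)) * volume (ball (0 : Euc n) 1) ^ ((α - γ) / n) *
        ENNReal.ofReal (‖x‖ ^ (α - γ)) := by
    have hexp : (n : ℝ) * ((α - γ) / n) = α - γ := by field_simp
    have hrpow : r ^ (α - γ) ≤ (κ / (1 - κ)) ^ (α - γ) * ‖x‖ ^ (α - γ) := by
      rw [← Real.mul_rpow hK (norm_nonneg x)]
      exact Real.rpow_le_rpow hr.le (radius_lt_of_mem_ball hκ hrc hx).le (sub_nonneg.2 hγα)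
    rw [volume_ball_rpow hn c hr, hexp, mul_right_comm, ← ENNReal.ofReal_mul (by positivity)]
    exact mul_le_mul_left (ENNReal.ofReal_le_ofReal hrpow) _
  rw [hsplit, mul_assoc]
  exact mul_le_mul' hvol (le_locFracMax g hr hrc hx)

lemma setLIntegral_ball_mul_rpow_le_locFracMax (hn : 0 < n) {κ α γ : ℝ} (hαn : α < n)
    (g : Euc n → ℝ≥0∞) {x : Euc n} {ρ : ℝ} (hρ : 0 < ρ) (hρx : ρ < κ * ‖x‖) :
    ∫⁻ y in ball x ρ, g y * ENNReal.ofReal (‖x - y‖ ^ (α - n)) ≤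
      ENNReal.ofReal ((2⁻¹ : ℝ) ^ (α - n)) * (1 - ENNReal.ofReal ((2⁻¹ : ℝ) ^ (α - γ)))⁻¹ *
        volume (ball (0 : Euc n) 1) ^ (1 - γ / n) * ENNReal.ofReal (ρ ^ (α - γ)) *
          locFracMax n κ γ g x := by
  set q : ℝ := 2⁻¹
  have hq : 0 < q := by norm_num
  set V := volume (ball (0 : Euc n) 1)
  set M := locFracMax n κ γ g x
  have hball : ∀ j : ℕ, ∫⁻ y in ball x (q ^ j * ρ), g y ≤
      ENNReal.ofReal ((q ^ j * ρ) ^ ((n : ℝ) - γ)) * V ^ (1 - γ / n) * M := fun j =>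
    setLIntegral_ball_le_locFracMax hn g (by positivity) <| lt_of_le_of_lt
      (mul_le_of_le_one_left hρ.le (pow_le_one₀ hq.le (by norm_num))) hρx
  calc ∫⁻ y in ball x ρ, g y * ENNReal.ofReal (‖x - y‖ ^ (α - n))
      ≤ ∑' j : ℕ, ENNReal.ofReal ((q ^ (j + 1) * ρ) ^ (α - n)) *
          ∫⁻ y in ball x (q ^ j * ρ), g y :=
        setLIntegral_ball_mul_rpow_norm_sub_le_tsum volume g x hq (by norm_num) hρ (by linarith)
    _ ≤ ∑' j : ℕ, ENNReal.ofReal ((q ^ (j + 1) * ρ) ^ (α - n)) *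
          (ENNReal.ofReal ((q ^ j * ρ) ^ ((n : ℝ) - γ)) * V ^ (1 - γ / n) * M) :=
        ENNReal.tsum_le_tsum fun j => mul_le_mul_right (hball j) _
    _ = ∑' j : ℕ, ENNReal.ofReal (q ^ (α - n)) * V ^ (1 - γ / n) * ENNReal.ofReal (ρ ^ (α - γ)) *
          M * ENNReal.ofReal (q ^ (α - γ)) ^ j := by
        refine tsum_congr fun j => ?_
        rw [← mul_assoc, ← mul_assoc, ← ENNReal.ofReal_mul (by positivity),
          pow_succ_mul_rpow_mul_pow_mul_rpow hq hρ, show α - n + (n - γ) = α - γ by ring,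
          ENNReal.ofReal_mul (by positivity), ENNReal.ofReal_mul (by positivity),
          ENNReal.ofReal_pow (by positivity)]
        ring
    _ = _ := by
        rw [ENNReal.tsum_mul_left, ENNReal.tsum_geometric]
        ring

lemma locFracInt_le_mul_locFracMax (hn : 0 < n) {κ α γ : ℝ} (hκ : 0 ≤ κ) (hγα : γ ≤ α)
    (hαn : α < n) (g : Euc n → ℝ≥0∞) (x : Euc n) :
    locFracInt n κ α g x ≤
      ENNReal.ofReal ((2⁻¹ : ℝ) ^ (α - n)) * (1 - ENNReal.ofReal ((2⁻¹ : ℝ) ^ (α - γ)))⁻¹ *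
        volume (ball (0 : Euc n) 1) ^ (1 - γ / n) * ENNReal.ofReal (κ ^ (α - γ)) *
          ENNReal.ofReal (‖x‖ ^ (α - γ)) * locFracMax n κ γ g x := by
  refine setLIntegral_ball_le_of_forall_lt _ _ _ fun ρ hρ hρx =>
    (setLIntegral_ball_mul_rpow_le_locFracMax (γ := γ) hn hαn g hρ hρx).trans ?_
  have hpow : ENNReal.ofReal (ρ ^ (α - γ)) ≤
      ENNReal.ofReal (κ ^ (α - γ)) * ENNReal.ofReal (‖x‖ ^ (α - γ)) := by
    rw [← ENNReal.ofReal_mul (by positivity), ← Real.mul_rpow hκ (norm_nonneg x)]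
    exact ENNReal.ofReal_le_ofReal (Real.rpow_le_rpow hρ.le hρx.le (sub_nonneg.2 hγα))
  calc _ ≤ ENNReal.ofReal ((2⁻¹ : ℝ) ^ (α - n)) * (1 - ENNReal.ofReal ((2⁻¹ : ℝ) ^ (α - γ)))⁻¹ *
        volume (ball (0 : Euc n) 1) ^ (1 - γ / n) *
          (ENNReal.ofReal (κ ^ (α - γ)) * ENNReal.ofReal (‖x‖ ^ (α - γ))) *
            locFracMax n κ γ g x := by gcongr
    _ = _ := by ring

end LocalOperators

theorem stmt12_general (n : ℕ) (hn : 0 < n) (α γ : ℝ) (hγα : γ < α) (hαn : α < n)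
    (κ : ℝ) (hκ : κ ∈ Set.Ioo (0 : ℝ) 1) :
    ∃ C : ℝ≥0∞, C < ⊤ ∧ ∀ f : Euc n → ℝ, Measurable f → ∀ x : Euc n, x ≠ 0 →
      locFracMax n κ α (fun y => ENNReal.ofReal |f y|) x ≤
        C * ENNReal.ofReal (‖x‖ ^ (α - γ)) *
          locFracMax n κ γ (fun y => ENNReal.ofReal |f y|) x ∧
      locFracInt n κ α (fun y => ENNReal.ofReal |f y|) x ≤
        C * ENNReal.ofReal (‖x‖ ^ (α - γ)) *
          locFracMax n κ γ (fun y => ENNReal.ofReal |f y|) x := by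
  have hV : ∀ e : ℝ, volume (ball (0 : Euc n) 1) ^ e ≠ ⊤ := fun e =>
    ENNReal.rpow_ne_top_of_ne_zero (measure_ball_pos volume 0 one_pos).ne' measure_ball_lt_top.ne
  have hgeom : (1 - ENNReal.ofReal ((2⁻¹ : ℝ) ^ (α - γ)))⁻¹ ≠ ⊤ :=
    ENNReal.inv_ne_top.2 (tsub_pos_of_lt (ENNReal.ofReal_lt_one.2
      (Real.rpow_lt_one (by norm_num) (by norm_num) (sub_pos.2 hγα)))).ne'
  refine ⟨ENNReal.ofReal ((κ / (1 - κ)) ^ (α - γ)) * volume (ball (0 : Euc n) 1) ^ ((α - γ) / n) +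
      ENNReal.ofReal ((2⁻¹ : ℝ) ^ (α - n)) * (1 - ENNReal.ofReal ((2⁻¹ : ℝ) ^ (α - γ)))⁻¹ *
        volume (ball (0 : Euc n) 1) ^ (1 - γ / n) * ENNReal.ofReal (κ ^ (α - γ)),
    ENNReal.add_lt_top.2 ⟨?_, ?_⟩, fun f _ x _ =>
    ⟨(locFracMax_le_mul_locFracMax hn hκ hγα.le _ x).trans (by gcongr; exact le_self_add),
      (locFracInt_le_mul_locFracMax hn hκ.1.le hγα.le hαn _ x).trans
        (by gcongr; exact le_add_self)⟩⟩
  · exact (ENNReal.mul_ne_top ofReal_ne_top (hV _)).lt_top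
  · exact (ENNReal.mul_ne_top (ENNReal.mul_ne_top (ENNReal.mul_ne_top ofReal_ne_top hgeom)
      (hV _)) ofReal_ne_top).lt_top

theorem stmt12 (n : ℕ) (hn : 0 < n) (α γ : ℝ) (hγ : 0 ≤ γ) (hγα : γ < α) (hαn : α < n)
    (κ : ℝ) (hκ : κ ∈ Set.Ioo (0 : ℝ) 1) :
    ∃ C : ℝ≥0∞, C < ⊤ ∧ ∀ f : Euc n → ℝ, Measurable f → ∀ x : Euc n, x ≠ 0 →
      locFracMax n κ α (fun y => ENNReal.ofReal |f y|) x ≤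
        C * ENNReal.ofReal (‖x‖ ^ (α - γ)) *
          locFracMax n κ γ (fun y => ENNReal.ofReal |f y|) x ∧
      locFracInt n κ α (fun y => ENNReal.ofReal |f y|) x ≤
        C * ENNReal.ofReal (‖x‖ ^ (α - γ)) *
          locFracMax n κ γ (fun y => ENNReal.ofReal |f y|) x :=
  stmt12_general n hn α γ hγα hαn κ hκ
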